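/- Let (A,B) be the segment of coefficients β, γ over [x₁,x₂], i.e., A = exp(−∫_{x₁}^{x₂} β) and B = ∫_{x₁}^{x₂} γ(x)·exp(−∫_{x}^{x₂} β) dx. Then the segment of the reversed-and-negated coefficients −β∘y and −γ∘y over [x₁,x₂], where y(x) = x₁ + x₂ − x, equals the group inverse (1/A, −B/A). -/
import Mathlib


/-- Reversing the interval via `y(x) = x₁ + x₂ − x` and negating the
    coefficients produces the group-inverse segment `(1/A, −B/A)`. -/
theorem seg_reverse_inverse (β γ : ℝ → ℝ) (hβ : Continuous β) (hγ : Continuous γ)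
    (x₁ x₂ : ℝ) (hx : x₁ ≤ x₂) (A B : ℝ)
    (hA : A = Real.exp (-(∫ x in x₁..x₂, β x)))
    (hB : B = ∫ x in x₁..x₂, γ x * Real.exp (-(∫ t in x..x₂, β t))) :
    Real.exp (-(∫ x in x₁..x₂, -β (x₁ + x₂ - x))) = 1 / A ∧
    (∫ x in x₁..x₂, (-γ (x₁ + x₂ - x)) *
        Real.exp (-(∫ t in x..x₂, -β (x₁ + x₂ - t)))) = -B / A := by
  have hAeq : 1 / A = Real.exp (∫ x in x₁..x₂, β x) := by
    rw [hA, one_div, ← Real.exp_neg, neg_neg]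
  have hinner : ∀ x : ℝ, (∫ t in x..x₂, -β (x₁ + x₂ - t))
      = -(∫ t in x₁..(x₁ + x₂ - x), β t) := by
    intro x
    rw [intervalIntegral.integral_neg]
    congr 1
    have := intervalIntegral.integral_comp_sub_left (a := x) (b := x₂) β (x₁ + x₂)
    simpa using this
  constructor
  · have h1 : (∫ x in x₁..x₂, -β (x₁ + x₂ - x)) = -(∫ x in x₁..x₂, β x) := by
      rw [intervalIntegral.integral_neg]
      congr 1
      have := intervalIntegral.integral_comp_sub_left (a := x₁) (b := x₂) β (x₁ + x₂)
      simpa using this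
    rw [h1, neg_neg, hAeq]
  · have hrw : (∫ x in x₁..x₂, (-γ (x₁ + x₂ - x)) *
        Real.exp (-(∫ t in x..x₂, -β (x₁ + x₂ - t))))
        = ∫ x in x₁..x₂,
            (fun u => -γ u * Real.exp (∫ t in x₁..u, β t)) (x₁ + x₂ - x) := by
      apply intervalIntegral.integral_congr
      intro x _
      simp only
      rw [hinner x, neg_neg]
    have hcomp := intervalIntegral.integral_comp_sub_left (a := x₁) (b := x₂)
      (fun u => -γ u * Real.exp (∫ t in x₁..u, β t)) (x₁ + x₂)
    rw [add_sub_cancel_right, add_sub_cancel_left] at hcomp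
    rw [hrw, hcomp]
    rw [hB, div_eq_mul_inv, hA, ← Real.exp_neg, neg_neg, neg_mul,
      ← intervalIntegral.integral_mul_const, ← intervalIntegral.integral_neg]
    apply intervalIntegral.integral_congr
    intro x hx'
    have hsplit : (∫ t in x₁..x, β t) + ∫ t in x..x₂, β t = ∫ t in x₁..x₂, β t :=
      intervalIntegral.integral_add_adjacent_intervals
        (hβ.intervalIntegrable _ _) (hβ.intervalIntegrable _ _)
    simp only
    rw [show (∫ t in x₁..x, β t) = (∫ t in x₁..x₂, β t) - ∫ t in x..x₂, β t by
      linarith, Real.exp_sub, Real.exp_neg]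
    field_simp
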